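/- arXiv:1702.08735 — 3 statements merged into one kernel-verified Lean document; each statement's English description precedes it below -/
import Mathlib

section
/- Chattering lemma (deterministic version): Let U be a compact metric space and (μ_t)_{t ∈ [0,T]} a measurable family of probability measures on U. Then there exists a sequence of measurable functions uₙ : [0,T] → U such that the measures δ_{uₙ(t)}(da) dt converge weakly (as finite measures on [0,T] × U) to μ_t(da) dt. -/
/-!
Fix a mesh `h = T / n`. Cover `U` by finitely many disjoint measurable cells `A j` lying in balls
`B(a j, h)`, and cut each time interval `J k = [k h, (k + 1) h)` into consecutive pieces `S k j`
of lengths `∫_{J k} μ_t(A j) dt`. The control `u` that sits at `a j` during `S k j` gives the block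
`J k × A j` the same mass under `δ_{u(t)}(da) dt` as under `μ_t(da) dt`, and its graph stays within
`h` of that block. A uniformly continuous `φ` is nearly constant on each block, so the two
integrals of `φ` differ by `O(ω_φ(h) T)`, which tends to `0` as `n → ∞`.
-/

open MeasureTheory Filter Topology Set ProbabilityTheory
open scoped ENNReal Function BoundedContinuousFunction

section

variable {α ι : Type*} [MeasurableSpace α] {ν ν₁ ν₂ : Measure α} {ψ : α → ℝ}

theorem abs_setIntegral_sub_mul_le {B : Set α} (hB : ν B < ∞) (hψ : IntegrableOn ψ B ν)
    {c ε : ℝ} (hψc : ∀ x ∈ B, |ψ x - c| ≤ ε) :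
    |∫ x in B, ψ x ∂ν - c * ν.real B| ≤ ε * ν.real B := by
  have hconst : c * ν.real B = ∫ _ in B, c ∂ν := by
    rw [setIntegral_const, smul_eq_mul, mul_comm]
  rw [hconst, ← integral_sub hψ (integrableOn_const hB.ne)]
  simpa only [Real.norm_eq_abs, mul_comm ε] using
    norm_setIntegral_le_of_norm_le_const hB fun x hx => (Real.norm_eq_abs _).trans_le (hψc x hx)

theorem integral_eq_sum_setIntegral (s : Finset ι) {B : ι → Set α}
    (hB : ∀ i ∈ s, MeasurableSet (B i)) (hd : (s : Set ι).PairwiseDisjoint B)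
    (hcover : ∀ᵐ x ∂ν, x ∈ ⋃ i ∈ s, B i) (hψ : Integrable ψ ν) :
    ∫ x, ψ x ∂ν = ∑ i ∈ s, ∫ x in B i, ψ x ∂ν := by
  rw [← integral_biUnion_finset s hB hd fun i _ => hψ.integrableOn,
    Measure.restrict_eq_self_of_ae_mem hcover]

theorem abs_integral_sub_integral_le_of_blocks [IsFiniteMeasure ν₁] [IsFiniteMeasure ν₂]
    (s : Finset ι) {B₁ B₂ : ι → Set α}
    (hB₁ : ∀ i ∈ s, MeasurableSet (B₁ i)) (hB₂ : ∀ i ∈ s, MeasurableSet (B₂ i))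
    (hd₁ : (s : Set ι).PairwiseDisjoint B₁) (hd₂ : (s : Set ι).PairwiseDisjoint B₂)
    (hcover : ∀ᵐ x ∂ν₂, x ∈ ⋃ i ∈ s, B₂ i) (hmass : ν₁ univ = ν₂ univ)
    (hν : ∀ i ∈ s, ν₁ (B₁ i) = ν₂ (B₂ i)) (hψ₁ : Integrable ψ ν₁) (hψ₂ : Integrable ψ ν₂)
    {c : ι → ℝ} {ε : ℝ} (hc₁ : ∀ i ∈ s, ∀ x ∈ B₁ i, |ψ x - c i| ≤ ε)
    (hc₂ : ∀ i ∈ s, ∀ x ∈ B₂ i, |ψ x - c i| ≤ ε) :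
    |∫ x, ψ x ∂ν₁ - ∫ x, ψ x ∂ν₂| ≤ 2 * ε * ν₁.real univ := by
  -- Equal total masses force `ν₁`, like `ν₂`, to be carried by the blocks.
  have hcover₁ : ∀ᵐ x ∂ν₁, x ∈ ⋃ i ∈ s, B₁ i := by
    rw [ae_mem_iff_measure_eq (Finset.measurableSet_biUnion s hB₁).nullMeasurableSet,
      measure_biUnion_finset hd₁ hB₁, Finset.sum_congr rfl hν, ← measure_biUnion_finset hd₂ hB₂,
      hmass, ← ae_mem_iff_measure_eq (Finset.measurableSet_biUnion s hB₂).nullMeasurableSet]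
    exact hcover
  have hblock : ∀ i ∈ s,
      |∫ x in B₁ i, ψ x ∂ν₁ - ∫ x in B₂ i, ψ x ∂ν₂| ≤ 2 * ε * ν₁.real (B₁ i) := by
    intro i hi
    have h₁ := abs_setIntegral_sub_mul_le (measure_lt_top ν₁ _) hψ₁.integrableOn (hc₁ i hi)
    have h₂ := abs_setIntegral_sub_mul_le (measure_lt_top ν₂ _) hψ₂.integrableOn (hc₂ i hi)
    rw [measureReal_def, ← hν i hi, ← measureReal_def] at h₂
    calc _ ≤ |∫ x in B₁ i, ψ x ∂ν₁ - c i * ν₁.real (B₁ i)|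
          + |c i * ν₁.real (B₁ i) - ∫ x in B₂ i, ψ x ∂ν₂| := abs_sub_le _ _ _
      _ ≤ 2 * ε * ν₁.real (B₁ i) := by rw [abs_sub_comm (c i * _)]; linarith
  have hmass₁ : ν₁.real univ = ∑ i ∈ s, ν₁.real (B₁ i) := by
    simpa using integral_eq_sum_setIntegral s hB₁ hd₁ hcover₁ (integrable_const (1 : ℝ))
  rw [integral_eq_sum_setIntegral s hB₁ hd₁ hcover₁ hψ₁,
    integral_eq_sum_setIntegral s hB₂ hd₂ hcover hψ₂, ← Finset.sum_sub_distrib, hmass₁,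
    Finset.mul_sum]
  exact (Finset.abs_sum_le_sum_abs _ _).trans (Finset.sum_le_sum hblock)

namespace MeasureTheory

theorem Measure.map_prodMk_apply_prod_singleton {β : Type*} [MeasurableSpace β]
    [MeasurableSingletonClass β] (μ : Measure α) {u : α → β} (hu : Measurable u) {S : Set α}
    (hS : MeasurableSet S) {b : β} (huS : EqOn u (fun _ => b) S) :
    μ.map (fun x => (x, u x)) (S ×ˢ {b}) = μ S := by
  have hgraph : Measurable fun x => (x, u x) := measurable_id.prodMk hu
  rw [Measure.map_apply hgraph (hS.prod (measurableSet_singleton b))]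
  congr 1
  ext x
  simpa using fun hx => huS hx

end MeasureTheory

end

theorem abs_integral_prodMk_sub_integral_compProd_le {α β ι : Type*} [MeasurableSpace α]
    [MeasurableSpace β] [MeasurableSingletonClass β] {μ : Measure α} [IsFiniteMeasure μ]
    {κ : Kernel α β} [IsMarkovKernel κ] {u : α → β} (hu : Measurable u) {ψ : α × β → ℝ}
    (hψ₁ : Integrable ψ (μ.map fun t => (t, u t))) (hψ₂ : Integrable ψ (μ ⊗ₘ κ))
    (s : Finset ι) {S J : ι → Set α} {A : ι → Set β} {a : ι → β}
    (hS : ∀ i ∈ s, MeasurableSet (S i)) (hJ : ∀ i ∈ s, MeasurableSet (J i))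
    (hA : ∀ i ∈ s, MeasurableSet (A i)) (hSd : (s : Set ι).PairwiseDisjoint S)
    (hJAd : (s : Set ι).PairwiseDisjoint fun i => J i ×ˢ A i)
    (hcover : ∀ᵐ t ∂μ, ∀ x, ∃ i ∈ s, t ∈ J i ∧ x ∈ A i)
    (huS : ∀ i ∈ s, EqOn u (fun _ => a i) (S i))
    (hvol : ∀ i ∈ s, μ (S i) = ∫⁻ t in J i, κ t (A i) ∂μ)
    {c : ι → ℝ} {ε : ℝ} (hc₁ : ∀ i ∈ s, ∀ t ∈ S i, |ψ (t, a i) - c i| ≤ ε)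
    (hc₂ : ∀ i ∈ s, ∀ t ∈ J i, ∀ x ∈ A i, |ψ (t, x) - c i| ≤ ε) :
    |∫ t, ψ (t, u t) ∂μ - ∫ t, ∫ x, ψ (t, x) ∂κ t ∂μ| ≤ 2 * ε * μ.real univ := by
  have hgraph : Measurable fun t => (t, u t) := measurable_id.prodMk hu
  have hJA : ∀ i ∈ s, MeasurableSet (J i ×ˢ A i) := fun i hi => (hJ i hi).prod (hA i hi)
  have key := abs_integral_sub_integral_le_of_blocks s
    (fun i hi => (hS i hi).prod (measurableSet_singleton (a i))) hJA
    (fun i hi j hj hij => (hSd hi hj hij).set_prod_left _ _) hJAd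
    (Measure.ae_compProd_of_ae_ae (Finset.measurableSet_biUnion s hJA) <| hcover.mono fun t ht =>
      ae_of_all _ fun x => by simpa only [mem_iUnion₂, exists_prop, mem_prod] using ht x)
    (by rw [Measure.map_apply hgraph .univ, Measure.compProd_apply_univ, preimage_univ])
    (fun i hi => by rw [Measure.map_prodMk_apply_prod_singleton μ hu (hS i hi) (huS i hi),
      hvol i hi, Measure.compProd_apply_prod (hJ i hi) (hA i hi)])
    hψ₁ hψ₂ (c := c) (ε := ε)
    (fun i hi ⟨t, x⟩ ⟨ht, (hx : x = a i)⟩ => hx ▸ hc₁ i hi t ht)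
    (fun i hi ⟨t, x⟩ ⟨ht, hx⟩ => hc₂ i hi t ht x hx)
  rwa [integral_map hgraph.aemeasurable hψ₁.aestronglyMeasurable, Measure.integral_compProd hψ₂,
    measureReal_def, Measure.map_apply hgraph .univ, preimage_univ, ← measureReal_def] at key

theorem exists_subsets_Ico_volume_eq (c : ℝ) {h : ℝ} (hh : 0 ≤ h) (w : ℕ → ℝ≥0∞)
    (hw : ∑' j, w j ≤ ENNReal.ofReal h) :
    ∃ S : ℕ → Set ℝ, (∀ j, MeasurableSet (S j)) ∧ Pairwise (Disjoint on S) ∧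
      (∀ j, S j ⊆ Ico c (c + h)) ∧ ∀ j, volume (S j) = w j := by
  have hsum_le : ∀ j, ∑ i ∈ Finset.range j, w i ≤ ENNReal.ofReal h :=
    fun j => (ENNReal.sum_le_tsum _).trans hw
  have hsum_ne_top : ∀ j, ∑ i ∈ Finset.range j, w i ≠ ∞ :=
    fun j => ne_top_of_le_ne_top ENNReal.ofReal_ne_top (hsum_le j)
  set P : ℕ → ℝ := fun j => c + (∑ i ∈ Finset.range j, w i).toReal
  have hP : Monotone P := monotone_nat_of_le_succ fun j => by
    simp only [P, add_le_add_iff_left]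
    exact ENNReal.toReal_mono (hsum_ne_top _) (Finset.sum_le_sum_of_subset (by simp))
  refine ⟨fun j => Ico (P j) (P (j + 1)), fun j => measurableSet_Ico, ?_, fun j => ?_, fun j => ?_⟩
  · simpa only [Order.succ_eq_add_one] using hP.pairwise_disjoint_on_Ico_succ
  · refine Ico_subset_Ico (le_add_of_nonneg_right ENNReal.toReal_nonneg) ?_
    exact add_le_add_right (ENNReal.toReal_le_of_le_ofReal hh (hsum_le _)) c
  · have hw_ne_top : w j ≠ ∞ := by
      have := hsum_ne_top (j + 1)
      rw [Finset.sum_range_succ] at this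
      exact (ENNReal.add_ne_top.1 this).2
    simp only [P, Real.volume_Ico, Finset.sum_range_succ,
      ENNReal.toReal_add (hsum_ne_top j) hw_ne_top, add_sub_add_left_eq_sub, add_sub_cancel_left,
      ENNReal.ofReal_toReal hw_ne_top]

def gridCell (h : ℝ) (k : ℕ) : Set ℝ := Ico (k * h) ((k + 1) * h)

theorem measurableSet_gridCell (h : ℝ) (k : ℕ) : MeasurableSet (gridCell h k) := measurableSet_Ico

theorem pairwise_disjoint_gridCell {h : ℝ} (hh : 0 ≤ h) : Pairwise (Disjoint on gridCell h) := by
  show Pairwise (Disjoint on fun k : ℕ => Ico (k * h) ((k + 1) * h))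
  simpa [Order.succ_eq_add_one] using (Nat.mono_cast.mul_const hh).pairwise_disjoint_on_Ico_succ

theorem gridCell_subset_Ico {h : ℝ} (hh : 0 ≤ h) {k n : ℕ} (hk : k < n) :
    gridCell h k ⊆ Ico 0 (n * h) := by
  refine Ico_subset_Ico (by positivity) ?_
  gcongr
  exact_mod_cast hk

theorem exists_lt_mem_gridCell {h t : ℝ} {n : ℕ} (ht : t ∈ Ico 0 (n * h)) :
    ∃ k < n, t ∈ gridCell h k := by
  obtain ⟨k, hk, hkt⟩ := mem_iUnion₂.1 <|
    Ico_subset_biUnion_Ico n (fun k : ℕ => (k : ℝ) * h) (by simpa using ht)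
  exact ⟨k, Finset.mem_range.1 hk, by simpa [gridCell] using hkt⟩

theorem left_mem_gridCell {h : ℝ} (hh : 0 < h) (k : ℕ) : (k : ℝ) * h ∈ gridCell h k :=
  ⟨le_rfl, by linarith⟩

theorem dist_lt_of_mem_gridCell {h t : ℝ} {k : ℕ} (ht : t ∈ gridCell h k) : dist t (k * h) < h := by
  rw [Real.dist_eq, abs_of_nonneg (sub_nonneg.2 ht.1)]
  linarith [ht.2]

theorem exists_chattering_partition {U : Type*} [MeasurableSpace U] (κ : Kernel ℝ U)
    [IsMarkovKernel κ] {A : ℕ → Set U} (hA : ∀ j, MeasurableSet (A j))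
    (hAd : Pairwise (Disjoint on A)) {h : ℝ} (hh : 0 ≤ h) :
    ∃ S : ℕ → ℕ → Set ℝ, (∀ k j, MeasurableSet (S k j)) ∧
      Pairwise (Disjoint on fun p : ℕ × ℕ => S p.1 p.2) ∧ (∀ k j, S k j ⊆ gridCell h k) ∧
      ∀ k j, volume (S k j) = ∫⁻ t in gridCell h k, κ t (A j) := by
  have hmass : ∀ k, ∑' j, ∫⁻ t in gridCell h k, κ t (A j) ≤ ENNReal.ofReal h := by
    intro k
    rw [← lintegral_tsum fun j => (κ.measurable_coe (hA j)).aemeasurable]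
    calc ∫⁻ t in gridCell h k, ∑' j, κ t (A j)
        ≤ ∫⁻ _ in gridCell h k, 1 :=
          lintegral_mono fun t => (measure_iUnion hAd hA).symm.trans_le prob_le_one
      _ = ENNReal.ofReal h := by simp [gridCell, add_mul]
  have hIco : ∀ k : ℕ, Ico (k * h) (k * h + h) = gridCell h k := fun k => by
    rw [gridCell, add_mul, one_mul]
  choose S hS hSd hSJ hSvol using fun k : ℕ => exists_subsets_Ico_volume_eq (k * h) hh _ (hmass k)
  refine ⟨S, hS, ?_, fun k j => hIco k ▸ hSJ k j, hSvol⟩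
  rintro ⟨k, j⟩ ⟨k', j'⟩ hne
  by_cases hk : k = k'
  · subst hk
    exact hSd k fun hj => hne (Prod.ext rfl hj)
  · exact (pairwise_disjoint_gridCell hh hk).mono (hIco k ▸ hSJ k j) (hIco k' ▸ hSJ k' j')

theorem exists_measurable_partition_subset_ball {U : Type*} [MetricSpace U] [CompactSpace U]
    [Nonempty U] [MeasurableSpace U] [OpensMeasurableSpace U] {r : ℝ} (hr : 0 < r) :
    ∃ (m : ℕ) (a : ℕ → U) (A : ℕ → Set U), (∀ j, MeasurableSet (A j)) ∧
      Pairwise (Disjoint on A) ∧ (∀ x, ∃ j < m, x ∈ A j) ∧ ∀ j, A j ⊆ Metric.ball (a j) r := by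
  classical
  obtain ⟨a, ha⟩ := TopologicalSpace.exists_dense_seq U
  have hcover : ∀ x, ∃ i, x ∈ Metric.ball (a i) r := fun x => Metric.denseRange_iff.1 ha x r hr
  obtain ⟨t, ht⟩ := isCompact_univ.elim_finite_subcover (fun i => Metric.ball (a i) r)
    (fun _ => Metric.isOpen_ball) fun x _ => mem_iUnion.2 (hcover x)
  obtain ⟨m, htm⟩ := t.exists_nat_subset_range
  refine ⟨m, a, disjointed fun i => Metric.ball (a i) r,
    .disjointed fun _ => measurableSet_ball, disjoint_disjointed _, fun x => ?_,
    disjointed_subset _⟩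
  obtain ⟨i, hit, hi⟩ := mem_iUnion₂.1 (ht (mem_univ x))
  refine ⟨Nat.find (hcover x), (Nat.find_min' _ hi).trans_lt (Finset.mem_range.1 (htm hit)), ?_⟩
  rw [← preimage_find_eq_disjointed _ hcover]
  rfl

theorem exists_chattering_control {U : Type*} [MetricSpace U] [CompactSpace U]
    [MeasurableSpace U] [BorelSpace U] (κ : Kernel ℝ U) [IsMarkovKernel κ] {T : ℝ} (hT : 0 < T)
    {n : ℕ} (hn : 0 < n) :
    ∃ u : ℝ → U, Measurable u ∧ ∀ (φ : ℝ × U →ᵇ ℝ) (ε : ℝ),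
      (∀ p ∈ Icc 0 T ×ˢ univ, ∀ q ∈ Icc 0 T ×ˢ univ, dist p q < T / n → |φ p - φ q| ≤ ε) →
      |(∫ t in Icc 0 T, φ (t, u t)) - ∫ t in Icc 0 T, ∫ a, φ (t, a) ∂κ t| ≤ 2 * ε * T := by
  have : Nonempty U := nonempty_of_isProbabilityMeasure (κ 0)
  set h := T / n
  have hh : 0 < h := by positivity
  have hT_eq : n * h = T := by simp only [h]; field_simp
  obtain ⟨m, a, A, hA, hAd, hAcov, hAa⟩ := exists_measurable_partition_subset_ball (U := U) hh
  obtain ⟨S, hS, hSd, hSJ, hSvol⟩ := exists_chattering_partition κ hA hAd hh.le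
  obtain ⟨u, hu, huS⟩ := exists_measurable_piecewise (fun p : ℕ × ℕ => S p.1 p.2)
    (fun p => hS p.1 p.2) (fun p _ => a p.2) (fun _ => measurable_const)
    fun p q hpq t ht => ((hSd hpq).ne_of_mem ht.1 ht.2 rfl).elim
  refine ⟨u, hu, fun φ ε hφ => ?_⟩
  have hJ : ∀ k < n, gridCell h k ⊆ Ico 0 T := fun k hk => hT_eq ▸ gridCell_subset_Ico hh.le hk
  have hφ_cell : ∀ p ∈ Finset.range n ×ˢ Finset.range m, ∀ t ∈ gridCell h p.1, ∀ x,
      dist x (a p.2) < h → |φ (t, x) - φ (p.1 * h, a p.2)| ≤ ε := fun p hp t ht x hx =>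
    have hk := Finset.mem_range.1 (Finset.mem_product.1 hp).1
    hφ _ ⟨Ico_subset_Icc_self (hJ _ hk ht), mem_univ x⟩ _
      ⟨Ico_subset_Icc_self (hJ _ hk (left_mem_gridCell hh _)), mem_univ _⟩
      (max_lt (dist_lt_of_mem_gridCell ht) hx)
  have key := abs_integral_prodMk_sub_integral_compProd_le (μ := volume.restrict (Ico 0 T))
    (κ := κ) hu (φ.integrable _) (φ.integrable _) (Finset.range n ×ˢ Finset.range m)
    (S := fun p => S p.1 p.2) (J := fun p => gridCell h p.1) (A := fun p => A p.2)
    (a := fun p => a p.2) (c := fun p => φ (p.1 * h, a p.2)) (fun _ _ => hS _ _)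
    (fun _ _ => measurableSet_gridCell _ _) (fun _ _ => hA _) (fun p _ q _ hpq => hSd hpq)
    (by rw [Finset.coe_product]
        exact .prod ((pairwise_disjoint_gridCell hh.le).set_pairwise _) (hAd.set_pairwise _))
    ((ae_restrict_mem measurableSet_Ico).mono fun t ht x => by
      obtain ⟨k, hk, hkt⟩ := exists_lt_mem_gridCell (hT_eq ▸ ht : t ∈ Ico 0 (n * h))
      obtain ⟨j, hj, hjx⟩ := hAcov x
      exact ⟨(k, j), Finset.mem_product.2 ⟨Finset.mem_range.2 hk, Finset.mem_range.2 hj⟩, hkt, hjx⟩)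
    (fun p _ => huS p)
    (fun p hp => by
      have hpJ := hJ _ (Finset.mem_range.1 (Finset.mem_product.1 hp).1)
      rw [Measure.restrict_apply (hS _ _), inter_eq_left.2 ((hSJ _ _).trans hpJ), hSvol,
        Measure.restrict_restrict_of_subset hpJ])
    (fun p hp t ht => hφ_cell p hp t (hSJ _ _ ht) _ (by simpa using hh))
    (fun p hp t ht x hx => hφ_cell p hp t ht x (hAa _ hx))
  rwa [← integral_Icc_eq_integral_Ico, ← integral_Icc_eq_integral_Ico,
    measureReal_restrict_apply_univ, Real.volume_real_Ico_of_le hT.le, sub_zero] at key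

/-- chattering lemma, deterministic version: every measurable family
`(μ_t)` of probability measures on a compact metric space `U` is the weak limit of
Dirac measures of measurable strict controls: there exist measurable `uₙ : [0,T] → U`
with `∫₀ᵀ φ(t, uₙ(t)) dt → ∫₀ᵀ ∫_U φ(t,a) μ_t(da) dt` for all bounded continuous `φ`. -/
theorem chattering_lemma {U : Type*} [MetricSpace U] [CompactSpace U]
    [MeasurableSpace U] [BorelSpace U] (T : ℝ) (hT : 0 < T)
    (μ : ℝ → Measure U) (hprob : ∀ t, IsProbabilityMeasure (μ t))
    (hmeas : ∀ A : Set U, MeasurableSet A → Measurable fun t => μ t A) :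
    ∃ u : ℕ → ℝ → U, (∀ n, Measurable (u n)) ∧
      ∀ φ : ℝ × U → ℝ, Continuous φ → (∃ M, ∀ p, |φ p| ≤ M) →
        Tendsto (fun n => ∫ t in Set.Icc (0:ℝ) T, φ (t, u n t)) atTop
          (𝓝 (∫ t in Set.Icc (0:ℝ) T, ∫ a, φ (t, a) ∂(μ t))) := by
  let κ : Kernel ℝ U := ⟨μ, Measure.measurable_of_measurable_coe μ hmeas⟩
  have : IsMarkovKernel κ := ⟨hprob⟩
  choose u hu hest using fun n : ℕ => exists_chattering_control κ hT n.succ_pos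
  refine ⟨u, hu, fun φ hφ ⟨M, hM⟩ => Metric.tendsto_atTop.2 fun ε hε => ?_⟩
  obtain ⟨δ, hδ, hφδ⟩ := Metric.uniformContinuousOn_iff.1
    ((isCompact_Icc.prod isCompact_univ).uniformContinuousOn_of_continuous hφ.continuousOn)
    (ε / (4 * T)) (by positivity)
  obtain ⟨N, hN⟩ := exists_nat_gt (T / δ)
  refine ⟨N, fun n hn => ?_⟩
  have hmesh : T / (n.succ : ℝ) < δ := by
    rw [div_lt_iff₀ hδ] at hN
    rw [div_lt_iff₀ (by positivity)]
    have : (N : ℝ) ≤ n.succ := by exact_mod_cast hn.trans n.le_succ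
    nlinarith
  have hφ' := hest n (.ofNormedAddCommGroup φ hφ M fun p => (Real.norm_eq_abs _).trans_le (hM p))
    (ε / (4 * T)) fun p hp q hq hpq => (hφδ p hp q hq (hpq.trans hmesh)).le
  rw [Real.dist_eq]
  calc _ ≤ 2 * (ε / (4 * T)) * T := hφ'
    _ < ε := by field_simp; linarith
end

section
/- Let U be a compact metric space, f : [0,T] × ℝ^d × U → ℝ continuous and bounded, and suppose xₙ : [0,T] → ℝ^d converge uniformly to x : [0,T] → ℝ^d, and the measures δ_{uₙ(t)}dt converge weakly on [0,T] × U to μ_t(da)dt. Then ∫₀ᵀ f(t, xₙ(t), uₙ(t)) dt → ∫₀ᵀ ∫_U f(t, x(t), a) μ_t(da) dt. -/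
open MeasureTheory Filter Topology

/-!
Since `U` is compact, `f` is uniformly continuous near the compact set of points `(t, x(t), a)`,
`t ∈ [0,T]`, `a ∈ U`; hence, once `n` is large, replacing `xₙ(t)` by `x(t)` changes the integrand
by less than any `ε` uniformly in `t`, and the two integrals have the same limit. After this
replacement the integrand is `φ(t, uₙ(t))` for the bounded continuous `φ(t, a) = f(t, x(t), a)`,
so weak convergence of the relaxed controls gives the limit.
-/

section UniformlyClose

variable {ι α : Type*} {l : Filter ι} {s : Set α}

theorem IsCompact.eventually_forall_dist_comp_lt {Y Z : Type*} [PseudoMetricSpace Y]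
    [PseudoMetricSpace Z] {K : Set Y} (hK : IsCompact K) {g : Y → Z}
    (hg : ∀ y ∈ K, ContinuousAt g y) {p q : ι → α → Y} (hq : ∀ i, ∀ t ∈ s, q i t ∈ K)
    (hpq : ∀ δ > 0, ∀ᶠ i in l, ∀ t ∈ s, dist (q i t) (p i t) < δ) :
    ∀ ε > 0, ∀ᶠ i in l, ∀ t ∈ s, dist (g (q i t)) (g (p i t)) < ε := by
  intro ε hε
  obtain ⟨δ, hδ, hclose⟩ := Metric.mem_uniformity_dist.1
    (hK.uniformContinuousAt_of_continuousAt g hg (Metric.dist_mem_uniformity hε))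
  filter_upwards [hpq δ hδ] with i hi t ht using hclose (hi t ht) (hq i t ht)

theorem tendsto_dist_setIntegral_of_forall_dist_lt [MeasurableSpace α] {μ : Measure α}
    {E : Type*} [NormedAddCommGroup E] [NormedSpace ℝ E] (hs : μ s < ⊤) {F G : ι → α → E}
    (hF : ∀ i, IntegrableOn (F i) s μ) (hG : ∀ i, IntegrableOn (G i) s μ)
    (hFG : ∀ ε > 0, ∀ᶠ i in l, ∀ t ∈ s, dist (F i t) (G i t) < ε) :
    Tendsto (fun i => dist (∫ t in s, F i t ∂μ) (∫ t in s, G i t ∂μ)) l (𝓝 0) := by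
  refine Metric.tendsto_nhds.2 fun ε hε => ?_
  set η := ε / (μ.real s + 1)
  have hη : 0 < η := by positivity
  filter_upwards [hFG η hη] with i hi
  have hbound : ∀ t ∈ s, ‖F i t - G i t‖ ≤ η := fun t ht => by
    rw [← dist_eq_norm]; exact (hi t ht).le
  calc dist (dist (∫ t in s, F i t ∂μ) (∫ t in s, G i t ∂μ)) 0
      = ‖∫ t in s, (F i t - G i t) ∂μ‖ := by
        rw [Real.dist_0_eq_abs, abs_dist, dist_eq_norm, integral_sub (hF i) (hG i)]
    _ ≤ η * μ.real s := norm_setIntegral_le_of_norm_le_const hs hbound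
    _ < ε := by
        rw [div_mul_eq_mul_div, div_lt_iff₀ (by positivity)]
        nlinarith [measureReal_nonneg (μ := μ) (s := s)]

end UniformlyClose

theorem running_cost_stability_general {U : Type*} [MetricSpace U] [CompactSpace U]
    [MeasurableSpace U] [BorelSpace U] (T : ℝ) (d : ℕ)
    (f : ℝ × (EuclideanSpace ℝ (Fin d)) × U → ℝ)
    (hfc : Continuous f) (hfb : ∃ M, ∀ p, |f p| ≤ M)
    (x : ℕ → ℝ → EuclideanSpace ℝ (Fin d)) (xlim : ℝ → EuclideanSpace ℝ (Fin d))
    (hxc : ∀ n, Continuous (x n)) (hxlimc : Continuous xlim)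
    (hunif : TendstoUniformlyOn x xlim atTop (Set.Icc (0:ℝ) T))
    (u : ℕ → ℝ → U) (hu : ∀ n, Measurable (u n))
    (μ : ℝ → Measure U)
    (hweak : ∀ φ : ℝ × U → ℝ, Continuous φ → (∃ M, ∀ p, |φ p| ≤ M) →
      Tendsto (fun n => ∫ t in Set.Icc (0:ℝ) T, φ (t, u n t)) atTop
        (𝓝 (∫ t in Set.Icc (0:ℝ) T, ∫ a, φ (t, a) ∂(μ t)))) :
    Tendsto (fun n => ∫ t in Set.Icc (0:ℝ) T, f (t, x n t, u n t)) atTop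
      (𝓝 (∫ t in Set.Icc (0:ℝ) T, ∫ a, f (t, xlim t, a) ∂(μ t))) := by
  obtain ⟨M, hM⟩ := hfb
  have hlim := hweak (fun p => f (p.1, xlim p.1, p.2)) (by fun_prop) ⟨M, fun p => hM _⟩
  have hint : ∀ y : ℝ → EuclideanSpace ℝ (Fin d), Measurable y → ∀ n,
      IntegrableOn (fun t => f (t, y t, u n t)) (Set.Icc 0 T) :=
    fun y hy n => Measure.integrableOn_of_bounded measure_Icc_lt_top.ne
      (hfc.measurable.comp (measurable_id.prodMk (hy.prodMk (hu n)))).aestronglyMeasurable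
      (ae_of_all _ fun t => (Real.norm_eq_abs _).trans_le (hM _))
  have hK : IsCompact ((fun p : ℝ × U => (p.1, xlim p.1, p.2)) '' Set.Icc 0 T ×ˢ Set.univ) :=
    (isCompact_Icc.prod isCompact_univ).image (by fun_prop)
  have hclose := hK.eventually_forall_dist_comp_lt (l := atTop) (fun _ _ => hfc.continuousAt)
    (p := fun n t => (t, x n t, u n t)) (q := fun n t => (t, xlim t, u n t))
    (fun n t ht => ⟨(t, u n t), ⟨ht, trivial⟩, rfl⟩)
    (fun δ hδ => by simpa [Prod.dist_eq] using Metric.tendstoUniformlyOn_iff.1 hunif δ hδ)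
  exact hlim.congr_dist (tendsto_dist_setIntegral_of_forall_dist_lt measure_Icc_lt_top
    (hint xlim hxlimc.measurable) (fun n => hint (x n) (hxc n).measurable n) hclose)

/-- stability of the running cost: if `f` is bounded continuous,
`xₙ → x` uniformly on `[0,T]` and `δ_{uₙ(t)}dt → μ_t(da)dt` weakly, then
`∫₀ᵀ f(t, xₙ(t), uₙ(t)) dt → ∫₀ᵀ ∫_U f(t, x(t), a) μ_t(da) dt`. -/
theorem running_cost_stability {U : Type*} [MetricSpace U] [CompactSpace U]
    [MeasurableSpace U] [BorelSpace U] (T : ℝ) (hT : 0 < T) (d : ℕ)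
    (f : ℝ × (EuclideanSpace ℝ (Fin d)) × U → ℝ)
    (hfc : Continuous f) (hfb : ∃ M, ∀ p, |f p| ≤ M)
    (x : ℕ → ℝ → EuclideanSpace ℝ (Fin d)) (xlim : ℝ → EuclideanSpace ℝ (Fin d))
    (hxc : ∀ n, Continuous (x n)) (hxlimc : Continuous xlim)
    (hunif : TendstoUniformlyOn x xlim atTop (Set.Icc (0:ℝ) T))
    (u : ℕ → ℝ → U) (hu : ∀ n, Measurable (u n))
    (μ : ℝ → Measure U) (hprob : ∀ t, IsProbabilityMeasure (μ t))
    (hmeas : ∀ A : Set U, MeasurableSet A → Measurable fun t => μ t A)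
    (hweak : ∀ φ : ℝ × U → ℝ, Continuous φ → (∃ M, ∀ p, |φ p| ≤ M) →
      Tendsto (fun n => ∫ t in Set.Icc (0:ℝ) T, φ (t, u n t)) atTop
        (𝓝 (∫ t in Set.Icc (0:ℝ) T, ∫ a, φ (t, a) ∂(μ t)))) :
    Tendsto (fun n => ∫ t in Set.Icc (0:ℝ) T, f (t, x n t, u n t)) atTop
      (𝓝 (∫ t in Set.Icc (0:ℝ) T, ∫ a, f (t, xlim t, a) ∂(μ t))) :=
  running_cost_stability_general T d f hfc hfb x xlim hxc hxlimc hunif u hu μ hweak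
end

section
/- Let Ê[·] = sup_{P ∈ P} E^{P}[·] be a sublinear expectation from a family P of probability measures, and ξₙ, ξ bounded measurable with Ê[|ξₙ − ξ|] → 0 (convergence in sublinear L¹). Then there exists a subsequence (ξ_{n_k}) converging to ξ quasi-surely, i.e., outside a set A with sup_{P ∈ P} P(A) = 0. -/
/-! Choose a subsequence along which `Ê[|ξ_{n_k} − ξ|] ≤ 2⁻ᵏ`. Under every `P ∈ 𝒫` the integrals
`E^P[|ξ_{n_k} − ξ|]` are then summable, so `∑ₖ |ξ_{n_k} − ξ|` is `P`-a.s. finite and its terms tend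
to `0`. The exceptional set does not depend on `P`, so it is polar. -/

open MeasureTheory Filter Topology
open scoped ENNReal

section

variable {α E : Type*} [MeasurableSpace α] [NormedAddCommGroup E] {μ : Measure α}

theorem ae_tendsto_zero_of_summable_integral_norm {g : ℕ → α → E}
    (hint : ∀ k, Integrable (g k) μ) (hsum : Summable fun k => ∫ a, ‖g k a‖ ∂μ) :
    ∀ᵐ a ∂μ, Tendsto (fun k => g k a) atTop (𝓝 0) := by
  have hmeas : ∀ k, AEMeasurable (fun a => ‖g k a‖ₑ) μ :=
    fun k => (hint k).aestronglyMeasurable.enorm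
  have hfinite : ∫⁻ a, ∑' k, ‖g k a‖ₑ ∂μ ≠ ∞ := by
    rw [lintegral_tsum hmeas]
    simp_rw [← ofReal_integral_norm_eq_lintegral_enorm (hint _)]
    rw [← ENNReal.ofReal_tsum_of_nonneg (fun k => integral_nonneg fun _ => norm_nonneg _) hsum]
    exact ENNReal.ofReal_ne_top
  filter_upwards [ae_lt_top' (AEMeasurable.tsum hmeas) hfinite] with a ha
  exact tendsto_zero_iff_enorm_tendsto_zero.2 (ENNReal.tendsto_atTop_zero_of_tsum_ne_top ha.ne)

end

section

variable {Ω : Type*} [MeasurableSpace Ω]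

noncomputable def upperExpectation (Pfam : Set (Measure Ω)) (f : Ω → ℝ) : ℝ :=
  ⨆ P : Pfam, ∫ ω, f ω ∂(P : Measure Ω)

theorem integral_le_upperExpectation {Pfam : Set (Measure Ω)}
    (hprob : ∀ P ∈ Pfam, IsProbabilityMeasure P) {f : Ω → ℝ} {C : ℝ} (hC : ∀ ω, |f ω| ≤ C)
    {P : Measure Ω} (hP : P ∈ Pfam) : ∫ ω, f ω ∂P ≤ upperExpectation Pfam f := by
  have hbound : ∀ Q ∈ Pfam, ∫ ω, f ω ∂Q ≤ C := fun Q hQ => by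
    have := hprob Q hQ
    have h := norm_integral_le_of_norm_le_const (μ := Q) (f := f) (Eventually.of_forall hC)
    rw [probReal_univ, mul_one, Real.norm_eq_abs] at h
    exact (le_abs_self _).trans h
  exact le_ciSup (f := fun Q : Pfam => ∫ ω, f ω ∂(Q : Measure Ω))
    ⟨C, by rintro _ ⟨Q, rfl⟩; exact hbound Q Q.2⟩ ⟨P, hP⟩

end

theorem sublinear_L1_implies_qs_subsequence_general {Ω : Type*} [MeasurableSpace Ω]
    (Pfam : Set (Measure Ω))
    (hprob : ∀ P ∈ Pfam, IsProbabilityMeasure P)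
    (ξ : ℕ → Ω → ℝ) (ξlim : Ω → ℝ)
    (hmeas : ∀ n, Measurable (ξ n)) (hmeaslim : Measurable ξlim)
    (hbdd : ∀ n, ∃ M, ∀ ω, |ξ n ω| ≤ M) (hbddlim : ∃ M, ∀ ω, |ξlim ω| ≤ M)
    (hL1 : Tendsto (fun n => ⨆ P : Pfam, ∫ ω, |ξ n ω - ξlim ω| ∂(P : Measure Ω))
      atTop (𝓝 0)) :
    ∃ φ : ℕ → ℕ, StrictMono φ ∧
      ∃ A : Set Ω, MeasurableSet A ∧ (∀ P ∈ Pfam, P A = 0) ∧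
        ∀ ω ∉ A, Tendsto (fun k => ξ (φ k) ω) atTop (𝓝 (ξlim ω)) := by
  obtain ⟨M', hM'⟩ := hbddlim
  have hdiff_bdd : ∀ n, ∃ C, ∀ ω, |ξ n ω - ξlim ω| ≤ C := fun n => by
    obtain ⟨M, hM⟩ := hbdd n
    exact ⟨M + M', fun ω => (abs_sub _ _).trans (add_le_add (hM ω) (hM' ω))⟩
  obtain ⟨φ, hφ, hφle⟩ := extraction_forall_of_eventually fun k =>
    hL1.eventually (eventually_le_nhds (by positivity : (0 : ℝ) < (1 / 2) ^ k))
  set A := {ω | ¬Tendsto (fun k => ξ (φ k) ω - ξlim ω) atTop (𝓝 0)}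
  refine ⟨φ, hφ, A, (measurableSet_tendsto _ fun k => (hmeas (φ k)).sub hmeaslim).compl,
    fun P hP => ae_iff.1 ?_, fun ω hω => by simpa using (not_not.1 hω).add_const (ξlim ω)⟩
  have := hprob P hP
  have hint : ∀ n, Integrable (fun ω => ξ n ω - ξlim ω) P := fun n => by
    obtain ⟨C, hC⟩ := hdiff_bdd n
    exact .of_bound ((hmeas n).sub hmeaslim).aestronglyMeasurable C (.of_forall hC)
  refine ae_tendsto_zero_of_summable_integral_norm (fun k => hint (φ k))
    (summable_geometric_two.of_nonneg_of_le (fun k => integral_nonneg fun _ => norm_nonneg _)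
      fun k => ?_)
  obtain ⟨C, hC⟩ := hdiff_bdd (φ k)
  exact (integral_le_upperExpectation hprob (fun ω => (abs_abs _).trans_le (hC ω)) hP).trans
    (hφle k)

/-- convergence in the sublinear `L¹` norm
`Ê[|ξₙ − ξ|] = sup_{P ∈ Pfam} E^P[|ξₙ − ξ|] → 0` implies quasi-sure convergence of a
subsequence: some subsequence converges pointwise outside a polar set. -/
theorem sublinear_L1_implies_qs_subsequence {Ω : Type*} [MeasurableSpace Ω]
    (Pfam : Set (Measure Ω)) (hne : Pfam.Nonempty)
    (hprob : ∀ P ∈ Pfam, IsProbabilityMeasure P)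
    (ξ : ℕ → Ω → ℝ) (ξlim : Ω → ℝ)
    (hmeas : ∀ n, Measurable (ξ n)) (hmeaslim : Measurable ξlim)
    (hbdd : ∀ n, ∃ M, ∀ ω, |ξ n ω| ≤ M) (hbddlim : ∃ M, ∀ ω, |ξlim ω| ≤ M)
    (hL1 : Tendsto (fun n => ⨆ P : Pfam, ∫ ω, |ξ n ω - ξlim ω| ∂(P : Measure Ω))
      atTop (𝓝 0)) :
    ∃ φ : ℕ → ℕ, StrictMono φ ∧
      ∃ A : Set Ω, MeasurableSet A ∧ (∀ P ∈ Pfam, P A = 0) ∧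
        ∀ ω ∉ A, Tendsto (fun k => ξ (φ k) ω) atTop (𝓝 (ξlim ω)) :=
  sublinear_L1_implies_qs_subsequence_general Pfam hprob ξ ξlim hmeas hmeaslim hbdd hbddlim hL1
end
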